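/- arXiv:1512.05966 — 2 statements merged into one kernel-verified Lean document; each statement's English description precedes it below -/
import Mathlib

section
/- (Urysohn-type lemma for the density topology) Let C be a closed subset of 2^ω and G a Gδ subset of 2^ω disjoint from C with λ(G) = 0. Then there is a λ-measurable, lower semicontinuous function h : 2^ω → [0,1] such that h ≡ 0 on C, h ≡ 1 on G, and h is approximately continuous at every point: for every β ∈ 2^ω and every ε > 0, the set {γ ∈ 2^ω : |h(γ) − h(β)| < ε} has density 1 at β. -/
open MeasureTheory Filter Topology
open scoped ENNReal

/-- The basic cylinder `N_s` determined by a finite binary sequence `s`: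
the set of all `β ∈ 2^ω` extending `s`. -/
def cyl (s : List Bool) : Set (ℕ → Bool) :=
  {β | ∀ i : Fin s.length, β i = s.get i}

/-- The initial segment `β↾l` of `β ∈ 2^ω`, as a finite binary sequence. -/
def seg (β : ℕ → Bool) (l : ℕ) : List Bool := List.ofFn (fun i : Fin l => β i)

/-- A martingale: a `[0,1]`-valued function on finite binary sequences with
`f(s) = (f(s⌢0) + f(s⌢1))/2`. -/
def IsMartingale (f : List Bool → ℝ) : Prop :=
  (∀ s, f s ∈ Set.Icc (0:ℝ) 1) ∧
  ∀ s, f s = (f (s ++ [false]) + f (s ++ [true])) / 2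

/-- The oscillation `osc(f,β) = inf_N sup_{p,q ≥ N} |f(β↾p) − f(β↾q)|`. -/
noncomputable def osc (f : List Bool → ℝ) (β : ℕ → Bool) : ℝ :=
  ⨅ N : ℕ, ⨆ p : {n : ℕ // N ≤ n}, ⨆ q : {n : ℕ // N ≤ n},
    |f (seg β p.1) - f (seg β q.1)|

/-- The set of divergence `D(f) = {β : osc(f,β) > 0}`. -/
def divSet (f : List Bool → ℝ) : Set (ℕ → Bool) := {β | 0 < osc f β}

/-- `M` has density 1 at `β`: `λ(M ∩ N_{β↾l}) / λ(N_{β↾l}) → 1`. -/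
def densityOne (μ : Measure (ℕ → Bool)) (M : Set (ℕ → Bool)) (β : ℕ → Bool) : Prop :=
  Tendsto (fun l : ℕ => μ (M ∩ cyl (seg β l)) / μ (cyl (seg β l))) atTop (𝓝 1)

/-- A set is `Σ⁰₃` iff it is a countable union of `Gδ` sets. -/
def IsSigma03 {X : Type*} [TopologicalSpace X] (S : Set X) : Prop :=
  ∃ g : ℕ → Set X, (∀ n, IsGδ (g n)) ∧ S = ⋃ n, g n

/-- A set is coanalytic (`Π¹₁`) iff its complement is analytic. -/
def IsCoanalytic {X : Type*} [TopologicalSpace X] (S : Set X) : Prop :=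
  MeasureTheory.AnalyticSet Sᶜ

/-- The associated (partial) function of a martingale: `ψ(f)(β) = lim_l f(β↾l)`
(a junk value if the limit does not exist). -/
noncomputable def psi (f : List Bool → ℝ) (β : ℕ → Bool) : ℝ :=
  limUnder atTop (fun l => f (seg β l))

/-!
Urysohn's construction, run in the density topology. By the Lebesgue density theorem for dyadic
cylinders (a consequence of the maximal inequality for the first cylinders on which a set has
relative measure at least `c`), almost every point of a closed set `A` is a density point of `A`.
The exceptional null set, off a closed `F ⊆ A`, is covered by an open set `U` of density zero at
every point of `F`; then `F ∪ (A \ U)` is closed, has density one at every point of `F`, and `A`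
has density one at each of its points. Interpolating in this way along the dyadic rationals,
starting from `C` and a closed set `A ⊇ C` missing `G` with density one at `C`, yields closed sets
`E q`; the function `h x = inf {q | x ∈ E q}` is lower semicontinuous because the `E q` are
closed, and approximately continuous because `E q` has density one at every point of `E p` for
`p < q`.
-/

local notation "𝒞" => ℕ → Bool

@[simp] lemma seg_length (β : 𝒞) (l : ℕ) : (seg β l).length = l := by
  simp [seg]

lemma cyl_seg (β : 𝒞) (l : ℕ) : cyl (seg β l) = PiNat.cylinder β l := by
  ext γ
  simp [cyl, seg, Fin.forall_iff]

lemma self_mem_cyl_seg (β : 𝒞) (l : ℕ) : β ∈ cyl (seg β l) := by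
  simp [cyl_seg]

lemma cyl_seg_anti (β : 𝒞) {l l' : ℕ} (h : l ≤ l') : cyl (seg β l') ⊆ cyl (seg β l) := by
  simpa only [cyl_seg] using PiNat.cylinder_anti β h

lemma seg_take (β : 𝒞) {m n : ℕ} (h : m ≤ n) : (seg β n).take m = seg β m := by
  rw [seg, ← Fin.ofFn_take_eq_take_ofFn h]
  rfl

lemma seg_eq_of_mem_cyl {γ : 𝒞} {s : List Bool} (h : γ ∈ cyl s) : seg γ s.length = s :=
  List.ext_get (by simp) fun i _ hi => by simpa [seg] using h ⟨i, hi⟩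

lemma mem_cyl_seg_iff {β γ : 𝒞} {l : ℕ} : γ ∈ cyl (seg β l) ↔ seg γ l = seg β l := by
  refine ⟨fun h => by simpa using seg_eq_of_mem_cyl h, fun h => ?_⟩
  rw [← h]
  exact self_mem_cyl_seg γ l

lemma isOpen_cyl (s : List Bool) : IsOpen (cyl s) := by
  have : cyl s = ⋂ i : Fin s.length, (fun β : 𝒞 => β i) ⁻¹' {s.get i} := by
    ext β; simp [cyl]
  rw [this]
  exact isOpen_iInter_of_finite fun i => (continuous_apply _).isOpen_preimage _ (isOpen_discrete _)

lemma eventually_cyl_seg_subset {β : 𝒞} {U : Set 𝒞} (hU : U ∈ 𝓝 β) :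
    ∀ᶠ l in atTop, cyl (seg β l) ⊆ U := by
  obtain ⟨_, ⟨x, n, rfl⟩, hβ, hU⟩ := (PiNat.isTopologicalBasis_cylinders _).mem_nhds_iff.1 hU
  filter_upwards [eventually_ge_atTop n] with l hl
  rw [cyl_seg]
  exact (PiNat.cylinder_anti β hl).trans (PiNat.mem_cylinder_iff_eq.1 hβ ▸ hU)

section Density

variable {μ : Measure 𝒞}

lemma measure_inter_cyl_seg_div_le_one (M : Set 𝒞) (β : 𝒞) (l : ℕ) :
    μ (M ∩ cyl (seg β l)) / μ (cyl (seg β l)) ≤ 1 :=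
  ENNReal.div_le_of_le_mul (by rw [one_mul]; exact measure_mono Set.inter_subset_right)

variable {M M' : Set 𝒞} {β : 𝒞}

lemma densityOne_mono (hM : densityOne μ M β) (h : M ⊆ M') : densityOne μ M' β :=
  tendsto_of_tendsto_of_tendsto_of_le_of_le hM tendsto_const_nhds
    (fun _ => ENNReal.div_le_div_right (measure_mono (Set.inter_subset_inter_left _ h)) _)
    (measure_inter_cyl_seg_div_le_one _ β)

lemma densityOne_inter_of_mem_nhds (hM : densityOne μ M β) (hU : M' ∈ 𝓝 β) :
    densityOne μ (M ∩ M') β := by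
  refine hM.congr' ?_
  filter_upwards [eventually_cyl_seg_subset hU] with l hl
  rw [Set.inter_assoc, Set.inter_eq_right.2 hl]

variable (hμ : ∀ s : List Bool, μ (cyl s) = (1/2 : ℝ≥0∞) ^ s.length)
include hμ

lemma isFiniteMeasure_of_measure_cyl : IsFiniteMeasure μ :=
  ⟨by simp [show μ Set.univ = 1 by simpa [cyl] using hμ []]⟩

lemma measure_cyl_seg (β : 𝒞) (l : ℕ) : μ (cyl (seg β l)) = (1/2 : ℝ≥0∞) ^ l := by
  rw [hμ, seg_length]

lemma measure_cyl_seg_ne_zero (β : 𝒞) (l : ℕ) : μ (cyl (seg β l)) ≠ 0 := by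
  simp [measure_cyl_seg hμ]

lemma measure_cyl_seg_ne_top (β : 𝒞) (l : ℕ) : μ (cyl (seg β l)) ≠ ⊤ := by
  simp [measure_cyl_seg hμ]

lemma densityOne_univ (β : 𝒞) : densityOne μ Set.univ β := by
  simp only [densityOne, Set.univ_inter]
  refine tendsto_const_nhds.congr fun l => ?_
  rw [ENNReal.div_self (measure_cyl_seg_ne_zero hμ β l) (measure_cyl_seg_ne_top hμ β l)]

lemma densityOne_of_tendsto_sdiff
    (h : Tendsto (fun l => μ (cyl (seg β l) \ M) / μ (cyl (seg β l))) atTop (𝓝 0)) :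
    densityOne μ M β := by
  have hsub : Tendsto (fun l => 1 - μ (cyl (seg β l) \ M) / μ (cyl (seg β l))) atTop (𝓝 1) := by
    simpa using ENNReal.Tendsto.sub tendsto_const_nhds h (Or.inl ENNReal.one_ne_top)
  refine tendsto_of_tendsto_of_tendsto_of_le_of_le hsub tendsto_const_nhds (fun l => ?_)
    (measure_inter_cyl_seg_div_le_one _ β)
  rw [tsub_le_iff_right, ← ENNReal.add_div, Set.inter_comm,
    ← ENNReal.div_self (measure_cyl_seg_ne_zero hμ β l) (measure_cyl_seg_ne_top hμ β l)]
  exact ENNReal.div_le_div_right (measure_le_inter_add_sdiff _ _ _) _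

lemma tendsto_sdiff_of_densityOne (hMm : MeasurableSet M) (hM : densityOne μ M β) :
    Tendsto (fun l => μ (cyl (seg β l) \ M) / μ (cyl (seg β l))) atTop (𝓝 0) := by
  have hsub := ENNReal.Tendsto.sub tendsto_const_nhds hM (Or.inl ENNReal.one_ne_top)
  rw [tsub_self] at hsub
  refine hsub.congr fun l => ?_
  refine ENNReal.sub_eq_of_eq_add_rev
    (ne_top_of_le_ne_top ENNReal.one_ne_top (measure_inter_cyl_seg_div_le_one M β l)) ?_
  rw [← ENNReal.add_div, Set.inter_comm, measure_inter_add_sdiff _ hMm,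
    ENNReal.div_self (measure_cyl_seg_ne_zero hμ β l) (measure_cyl_seg_ne_top hμ β l)]

lemma densityOne_inter (hMm : MeasurableSet M) (hM'm : MeasurableSet M')
    (hM : densityOne μ M β) (hM' : densityOne μ M' β) : densityOne μ (M ∩ M') β := by
  have hsum := (tendsto_sdiff_of_densityOne hμ hMm hM).add (tendsto_sdiff_of_densityOne hμ hM'm hM')
  rw [add_zero] at hsum
  refine densityOne_of_tendsto_sdiff hμ (tendsto_of_tendsto_of_tendsto_of_le_of_le
    tendsto_const_nhds hsum (fun _ => zero_le) fun l => ?_)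
  rw [← ENNReal.add_div, Set.sdiff_inter]
  exact ENNReal.div_le_div_right (measure_union_le _ _) _

end Density

section LebesgueDensity

variable {μ : Measure 𝒞}

def firstNodes (P : List Bool → Prop) : Set (List Bool) :=
  {s | P s ∧ ∀ m < s.length, ¬ P (s.take m)}

lemma pairwiseDisjoint_firstNodes (P : List Bool → Prop) :
    (firstNodes P).PairwiseDisjoint cyl := by
  have key : ∀ s ∈ firstNodes P, ∀ t ∈ firstNodes P, ∀ γ ∈ cyl s, γ ∈ cyl t →
      t.length ≤ s.length := by
    intro s hs t ht γ hγs hγt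
    by_contra! hlt
    apply ht.2 _ hlt
    rw [← seg_eq_of_mem_cyl hγt, seg_take γ hlt.le, seg_eq_of_mem_cyl hγs]
    exact hs.1
  intro s hs t ht hst
  refine Set.disjoint_left.2 fun γ hγs hγt => hst ?_
  have hlen := le_antisymm (key t ht s hs γ hγt hγs) (key s hs t ht γ hγs hγt)
  rw [← seg_eq_of_mem_cyl hγs, ← seg_eq_of_mem_cyl hγt, hlen]

lemma setOf_exists_subset_biUnion_firstNodes (P : List Bool → Prop) :
    {β | ∃ l, P (seg β l)} ⊆ ⋃ s ∈ firstNodes P, cyl s := by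
  classical
  intro β h
  refine Set.mem_biUnion (x := seg β (Nat.find h))
    ⟨by simpa using Nat.find_spec h, fun m hm => ?_⟩ (self_mem_cyl_seg β _)
  rw [seg_length] at hm
  rw [seg_take β hm.le]
  exact Nat.find_min h hm

lemma maximal_ineq_cyl (E : Set 𝒞) (hE : MeasurableSet E) (c : ℝ≥0∞) :
    c * μ {β | ∃ l, c * μ (cyl (seg β l)) ≤ μ (E ∩ cyl (seg β l))} ≤ μ E := by
  set T := firstNodes fun s => c * μ (cyl s) ≤ μ (E ∩ cyl s)
  have hT : T.Countable := Set.to_countable T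
  calc _ ≤ c * μ (⋃ t ∈ T, cyl t) := by
        gcongr
        exact setOf_exists_subset_biUnion_firstNodes fun s => c * μ (cyl s) ≤ μ (E ∩ cyl s)
    _ ≤ c * ∑' t : T, μ (cyl t) := by
        gcongr
        exact measure_biUnion_le μ hT _
    _ = ∑' t : T, c * μ (cyl t) := ENNReal.tsum_mul_left.symm
    _ ≤ ∑' t : T, μ (E ∩ cyl t) := ENNReal.tsum_le_tsum fun t => t.2.1
    _ = μ (⋃ t ∈ T, E ∩ cyl t) :=
        (measure_biUnion hT ((pairwiseDisjoint_firstNodes _).mono fun _ => Set.inter_subset_right)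
          fun t _ => hE.inter (isOpen_cyl t).measurableSet).symm
    _ ≤ μ E := measure_mono (Set.iUnion₂_subset fun _ _ => Set.inter_subset_left)

variable {S : Set 𝒞} (hμ : ∀ s : List Bool, μ (cyl s) = (1/2 : ℝ≥0∞) ^ s.length)
include hμ

lemma measure_setOf_frequently_le_measure_sdiff_eq_zero (hS : MeasurableSet S) {c : ℝ≥0∞}
    (hc : c ≠ 0) :
    μ {β | β ∈ S ∧ ∃ᶠ l in atTop, c * μ (cyl (seg β l)) ≤ μ (cyl (seg β l) \ S)} = 0 := by
  have := isFiniteMeasure_of_measure_cyl hμ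
  refine (mul_eq_zero.1 ?_).resolve_left hc
  refine le_antisymm (le_of_forall_gt fun δ hδ => ?_) zero_le
  obtain ⟨U, hSU, hU, -, hUS⟩ := hS.exists_isOpen_sdiff_lt (measure_ne_top μ S) hδ.ne'
  refine lt_of_le_of_lt (le_trans (mul_le_mul_right (measure_mono ?_) c)
    (maximal_ineq_cyl _ (hU.measurableSet.diff hS) c)) hUS
  rintro β ⟨hβS, hfreq⟩
  obtain ⟨l, hl, hlU⟩ :=
    (hfreq.and_eventually (eventually_cyl_seg_subset (hU.mem_nhds (hSU hβS)))).exists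
  exact ⟨l, hl.trans (measure_mono fun γ hγ => ⟨⟨hlU hγ.1, hγ.2⟩, hγ.1⟩)⟩

theorem ae_densityOne (hS : MeasurableSet S) : ∀ᵐ β ∂μ, β ∈ S → densityOne μ S β := by
  refine measure_mono_null (fun β hβ => ?_) (measure_iUnion_null fun m : ℕ =>
    measure_setOf_frequently_le_measure_sdiff_eq_zero hμ hS (c := (m : ℝ≥0∞)⁻¹) (by simp))
  obtain ⟨hβS, hβ⟩ : β ∈ S ∧ ¬ densityOne μ S β := by simpa using hβ
  have hfreq := mt (densityOne_of_tendsto_sdiff hμ) hβ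
  simp only [ENNReal.tendsto_atTop_zero, not_forall, not_exists, not_le] at hfreq
  obtain ⟨ε, hε, hfreq⟩ := hfreq
  obtain ⟨m, hm⟩ := ENNReal.exists_inv_nat_lt hε.ne'
  refine Set.mem_iUnion.2 ⟨m, hβS, frequently_atTop.2 fun N => ?_⟩
  obtain ⟨l, hl, hlt⟩ := hfreq N
  exact ⟨l, hl, ENNReal.mul_le_of_le_div (hm.trans hlt).le⟩

end LebesgueDensity

structure ClosedDensityNbhd (μ : Measure 𝒞) (F A : Set 𝒞) : Prop where
  isClosed_left : IsClosed F
  isClosed_right : IsClosed A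
  subset : F ⊆ A
  densityOne_of_mem : ∀ β ∈ F, densityOne μ A β

lemma ClosedDensityNbhd.trans {μ : Measure 𝒞} {F A B : Set 𝒞} (hFA : ClosedDensityNbhd μ F A)
    (hAB : ClosedDensityNbhd μ A B) : ClosedDensityNbhd μ F B :=
  ⟨hFA.isClosed_left, hAB.isClosed_right, hFA.subset.trans hAB.subset,
    fun β hβ => hAB.densityOne_of_mem β (hFA.subset hβ)⟩

instance (μ : Measure 𝒞) : IsTrans (Set 𝒞) (ClosedDensityNbhd μ) :=
  ⟨fun _ _ _ => ClosedDensityNbhd.trans⟩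

section ClosedDensityNbhd

variable {μ : Measure 𝒞} (hμ : ∀ s : List Bool, μ (cyl s) = (1/2 : ℝ≥0∞) ^ s.length)
include hμ

lemma exists_isOpen_sdiff_subset_densityOne_compl {F Z : Set 𝒞} (hF : IsClosed F)
    (hZ : μ Z = 0) :
    ∃ U, IsOpen U ∧ Z \ F ⊆ U ∧ ∀ β ∈ F, densityOne μ Uᶜ β := by
  have := isFiniteMeasure_of_measure_cyl hμ
  have hO : ∀ l : ℕ, ∃ O, Z ⊆ O ∧ IsOpen O ∧ μ O < (1/2 : ℝ≥0∞) ^ l * (1/2) ^ l := fun l =>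
    Set.exists_isOpen_lt_of_lt Z _ (by rw [hZ]; exact ENNReal.mul_pos (by simp) (by simp))
  choose O hZO hO hμO using hO
  set V : ℕ → Set 𝒞 := fun l => {γ | Disjoint (cyl (seg γ l)) F}
  have hV : ∀ l, IsOpen (V l) := fun l => isOpen_iff_forall_mem_open.2 fun γ hγ =>
    ⟨cyl (seg γ l), fun δ hδ => by simpa [V, mem_cyl_seg_iff.1 hδ] using hγ, isOpen_cyl _,
      self_mem_cyl_seg γ l⟩
  set U := ⋃ l, V l ∩ ⋂ j ∈ Set.Iic l, O j
  refine ⟨U, isOpen_iUnion fun l =>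
    (hV l).inter ((Set.finite_Iic l).isOpen_biInter fun j _ => hO j), ?_, fun β hβ => ?_⟩
  · rintro γ ⟨hγZ, hγF⟩
    obtain ⟨l, hl⟩ := (eventually_cyl_seg_subset (hF.isOpen_compl.mem_nhds hγF)).exists
    exact Set.mem_iUnion.2 ⟨l, Set.subset_compl_iff_disjoint_right.1 hl,
      Set.mem_iInter₂.2 fun j _ => hZO j hγZ⟩
  -- `V j` avoids `cyl (seg β l)` for `j ≤ l`, so on that cylinder `U` lies inside `O (l + 1)`.
  have hsub : ∀ l, cyl (seg β l) \ Uᶜ ⊆ O (l + 1) := by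
    intro l γ ⟨hγl, hγU⟩
    obtain ⟨j, hγV, hγO⟩ := Set.mem_iUnion.1 (not_not.1 hγU)
    refine Set.mem_iInter₂.1 hγO (l + 1) (Set.mem_Iic.2 ?_)
    by_contra! hjl
    have hβγ : β ∈ cyl (seg γ j) :=
      mem_cyl_seg_iff.2 (mem_cyl_seg_iff.1 (cyl_seg_anti β (Nat.lt_succ_iff.1 hjl) hγl)).symm
    exact Set.disjoint_left.1 hγV hβγ hβ
  refine densityOne_of_tendsto_sdiff hμ (tendsto_of_tendsto_of_tendsto_of_le_of_le
    tendsto_const_nhds (ENNReal.tendsto_pow_atTop_nhds_zero_of_lt_one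
      (by norm_num : (1/2 : ℝ≥0∞) < 1)) (fun _ => zero_le) fun l => ?_)
  rw [ENNReal.div_le_iff (measure_cyl_seg_ne_zero hμ β l) (measure_cyl_seg_ne_top hμ β l),
    measure_cyl_seg hμ]
  calc μ (cyl (seg β l) \ Uᶜ) ≤ μ (O (l + 1)) := measure_mono (hsub l)
    _ ≤ (1/2) ^ (l + 1) * (1/2) ^ (l + 1) := (hμO _).le
    _ ≤ (1/2) ^ l * (1/2) ^ l := by
        have := pow_le_pow_of_le_one (zero_le : 0 ≤ (1/2 : ℝ≥0∞)) (by norm_num) (Nat.le_succ l)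
        gcongr

lemma exists_isClosed_between {F A Z : Set 𝒞} (hF : IsClosed F) (hA : IsClosed A) (hFA : F ⊆ A)
    (hdA : ∀ β ∈ F, densityOne μ A β) (hZ : μ Z = 0) :
    ∃ H, IsClosed H ∧ F ⊆ H ∧ H ⊆ A ∧ (∀ β ∈ F, densityOne μ H β) ∧ H ∩ Z ⊆ F := by
  obtain ⟨U, hU, hZU, hUd⟩ := exists_isOpen_sdiff_subset_densityOne_compl hμ hF hZ
  refine ⟨F ∪ (A ∩ Uᶜ), hF.union (hA.inter hU.isClosed_compl), Set.subset_union_left,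
    Set.union_subset hFA Set.inter_subset_left, fun β hβ => ?_, ?_⟩
  · exact densityOne_mono (densityOne_inter hμ hA.measurableSet hU.isClosed_compl.measurableSet
      (hdA β hβ) (hUd β hβ)) Set.subset_union_right
  · rintro γ ⟨hγF | ⟨-, hγU⟩, hγZ⟩
    · exact hγF
    · by_contra hγF
      exact hγU (hZU ⟨hγZ, hγF⟩)

lemma ClosedDensityNbhd.exists_between {F A : Set 𝒞} (h : ClosedDensityNbhd μ F A) :
    ∃ H, ClosedDensityNbhd μ F H ∧ ClosedDensityNbhd μ H A := by
  obtain ⟨H, hH, hFH, hHA, hFd, hHZ⟩ := exists_isClosed_between hμ h.isClosed_left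
    h.isClosed_right h.subset h.densityOne_of_mem
    (ae_iff.1 (ae_densityOne hμ h.isClosed_right.measurableSet))
  refine ⟨H, ⟨h.isClosed_left, hH, hFH, hFd⟩, ⟨hH, h.isClosed_right, hHA, fun β hβ => ?_⟩⟩
  by_cases hβF : β ∈ F
  · exact h.densityOne_of_mem β hβF
  · by_contra hβd
    exact hβF (hHZ ⟨hβ, fun h' => hβd (h' (hHA hβ))⟩)

lemma exists_closedDensityNbhd_disjoint {C G : Set 𝒞} (hC : IsClosed C) (hG : μ G = 0)
    (hCG : Disjoint C G) : ∃ A, ClosedDensityNbhd μ C A ∧ Disjoint A G := by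
  obtain ⟨A, hA, hCA, -, hCd, hAG⟩ := exists_isClosed_between hμ hC isClosed_univ
    (Set.subset_univ C) (fun β _ => densityOne_univ hμ β) hG
  exact ⟨A, ⟨hC, hA, hCA, hCd⟩,
    Set.disjoint_left.2 fun β hβA hβG => Set.disjoint_left.1 hCG (hAG ⟨hβA, hβG⟩) hβG⟩

end ClosedDensityNbhd

section DyadicScale

variable {α : Type*} [Nonempty α] (R : α → α → Prop)

/-- The element placed at the dyadic rational `k / 2 ^ n` (meaningful for `k ≤ 2 ^ n`); odd
positions are filled `R`-between their two neighbours of the previous level. -/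
noncomputable def dyadicScale (a₀ a₁ : α) : ℕ → ℕ → α
  | 0, k => if k = 0 then a₀ else a₁
  | n + 1, k =>
    if k % 2 = 0 then dyadicScale a₀ a₁ n (k / 2)
    else Classical.epsilon fun c =>
      R (dyadicScale a₀ a₁ n (k / 2)) c ∧ R c (dyadicScale a₀ a₁ n (k / 2 + 1))

variable {R} {a₀ a₁ : α}

lemma dyadicScale_zero_zero : dyadicScale R a₀ a₁ 0 0 = a₀ := rfl

lemma dyadicScale_zero_one : dyadicScale R a₀ a₁ 0 1 = a₁ := rfl

lemma dyadicScale_two_mul (n k : ℕ) :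
    dyadicScale R a₀ a₁ (n + 1) (2 * k) = dyadicScale R a₀ a₁ n k := by
  simp [dyadicScale]

lemma dyadicScale_two_mul_add_one (n k : ℕ) :
    dyadicScale R a₀ a₁ (n + 1) (2 * k + 1) = Classical.epsilon fun c =>
      R (dyadicScale R a₀ a₁ n k) c ∧ R c (dyadicScale R a₀ a₁ n (k + 1)) := by
  simp [dyadicScale, Nat.add_mod, Nat.add_div]

lemma dyadicScale_add_mul_two_pow (n m k : ℕ) :
    dyadicScale R a₀ a₁ (n + m) (k * 2 ^ m) = dyadicScale R a₀ a₁ n k := by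
  induction m with
  | zero => simp
  | succ m ih =>
    rw [← ih, ← Nat.add_assoc, pow_succ, ← mul_assoc, mul_comm _ 2, dyadicScale_two_mul]

variable (hR : ∀ a b, R a b → ∃ c, R a c ∧ R c b) (h01 : R a₀ a₁)
include hR h01

lemma rel_dyadicScale_succ (n : ℕ) :
    ∀ k < 2 ^ n, R (dyadicScale R a₀ a₁ n k) (dyadicScale R a₀ a₁ n (k + 1)) := by
  induction n with
  | zero => simpa [dyadicScale] using h01
  | succ n ih =>
    intro k hk
    obtain ⟨j, rfl | rfl⟩ := Nat.even_or_odd' k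
    · rw [dyadicScale_two_mul, dyadicScale_two_mul_add_one]
      exact (Classical.epsilon_spec (hR _ _ (ih j (by omega)))).1
    · rw [show 2 * j + 1 + 1 = 2 * (j + 1) by ring, dyadicScale_two_mul,
        dyadicScale_two_mul_add_one]
      exact (Classical.epsilon_spec (hR _ _ (ih j (by omega)))).2

lemma rel_dyadicScale_of_lt [IsTrans α R] {n k n' k' : ℕ} (hk' : k' ≤ 2 ^ n')
    (hlt : (k : ℝ) / 2 ^ n < k' / 2 ^ n') :
    R (dyadicScale R a₀ a₁ n k) (dyadicScale R a₀ a₁ n' k') := by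
  have hlevel : ∀ N i j, i < j → j ≤ 2 ^ N →
      R (dyadicScale R a₀ a₁ N i) (dyadicScale R a₀ a₁ N j) := by
    intro N i j hij hj
    induction j, hij using Nat.le_induction with
    | base => exact rel_dyadicScale_succ hR h01 N i (by omega)
    | succ j hij ih =>
      exact _root_.trans (ih (by omega)) (rel_dyadicScale_succ hR h01 N j (by omega))
  rw [← dyadicScale_add_mul_two_pow n n' k, ← dyadicScale_add_mul_two_pow n' n k', add_comm n']
  refine hlevel _ _ _ ?_ ?_
  · rw [div_lt_div_iff₀ (by positivity) (by positivity)] at hlt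
    exact_mod_cast hlt
  · rw [pow_add, mul_comm (2 ^ n)]
    exact Nat.mul_le_mul_right _ hk'

end DyadicScale

lemma exists_dyadic_btwn {y z : ℝ} (hy : 0 ≤ y) (hyz : y < z) (hz : z ≤ 1) :
    ∃ n k : ℕ, k < 2 ^ n ∧ y < k / 2 ^ n ∧ (k : ℝ) / 2 ^ n < z := by
  obtain ⟨n, hn⟩ := exists_pow_lt_of_lt_one (sub_pos.2 hyz) (by norm_num : (1/2 : ℝ) < 1)
  have hpow : (0 : ℝ) < 2 ^ n := by positivity
  have hlt : y < (⌊y * 2 ^ n⌋₊ + 1 : ℕ) / 2 ^ n := by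
    rw [lt_div_iff₀ hpow]
    push_cast
    exact Nat.lt_floor_add_one _
  have hle : ((⌊y * 2 ^ n⌋₊ + 1 : ℕ) : ℝ) / 2 ^ n ≤ y + (1/2) ^ n := by
    rw [div_le_iff₀ hpow, add_mul, div_pow, one_pow, one_div_mul_cancel hpow.ne']
    push_cast
    linarith [Nat.floor_le (mul_nonneg hy hpow.le)]
  have hz' : ((⌊y * 2 ^ n⌋₊ + 1 : ℕ) : ℝ) / 2 ^ n < z := by linarith
  refine ⟨n, _, ?_, hlt, hz'⟩
  have := (div_lt_one hpow).1 (hz'.trans_le hz)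
  exact_mod_cast this

lemma div_two_pow_lt_one {n k : ℕ} (hk : k < 2 ^ n) : (k : ℝ) / 2 ^ n < 1 := by
  rw [div_lt_one (by positivity)]
  exact_mod_cast hk

section UrysohnFun

variable {X : Type*} (E : ℕ → ℕ → Set X)

def dyadicLevels (x : X) : Set ℝ :=
  insert 1 {q | ∃ n k : ℕ, k < 2 ^ n ∧ x ∈ E n k ∧ q = k / 2 ^ n}

noncomputable def urysohnFun (x : X) : ℝ :=
  sInf (dyadicLevels E x)

variable {E}

lemma nonneg_of_mem_dyadicLevels {x : X} {q : ℝ} (hq : q ∈ dyadicLevels E x) : 0 ≤ q := by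
  rcases hq with rfl | ⟨n, k, -, -, rfl⟩
  · exact zero_le_one
  · positivity

lemma bddBelow_dyadicLevels (x : X) : BddBelow (dyadicLevels E x) :=
  ⟨0, fun _ => nonneg_of_mem_dyadicLevels⟩

lemma urysohnFun_nonneg (x : X) : 0 ≤ urysohnFun E x :=
  le_csInf (Set.insert_nonempty _ _) fun _ => nonneg_of_mem_dyadicLevels

lemma urysohnFun_le_one (x : X) : urysohnFun E x ≤ 1 :=
  csInf_le (bddBelow_dyadicLevels x) (Set.mem_insert _ _)

lemma urysohnFun_le_of_mem {x : X} {n k : ℕ} (hk : k < 2 ^ n) (hx : x ∈ E n k) :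
    urysohnFun E x ≤ k / 2 ^ n :=
  csInf_le (bddBelow_dyadicLevels x) (Set.mem_insert_of_mem _ ⟨n, k, hk, hx, rfl⟩)

lemma urysohnFun_eq_one {x : X} (hx : ∀ n k, k < 2 ^ n → x ∉ E n k) : urysohnFun E x = 1 := by
  refine le_antisymm (urysohnFun_le_one x) (le_csInf (Set.insert_nonempty _ _) ?_)
  rintro _ (rfl | ⟨n, k, hk, hxE, -⟩)
  · exact le_rfl
  · exact absurd hxE (hx n k hk)

variable (hmono : ∀ {n k n' k' : ℕ}, k' < 2 ^ n' → (k : ℝ) / 2 ^ n < k' / 2 ^ n' →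
  E n k ⊆ E n' k')
include hmono

lemma mem_of_urysohnFun_lt {x : X} {n k : ℕ} (hk : k < 2 ^ n)
    (hx : urysohnFun E x < k / 2 ^ n) : x ∈ E n k := by
  obtain ⟨q, hq, hqx⟩ := exists_lt_of_csInf_lt (Set.insert_nonempty _ _) hx
  rcases hq with rfl | ⟨n', k', -, hxE, rfl⟩
  · exact absurd (hqx.trans (div_two_pow_lt_one hk)) (lt_irrefl 1)
  · exact hmono hk hqx hxE

lemma lowerSemicontinuous_urysohnFun [TopologicalSpace X]
    (hclosed : ∀ n k, k < 2 ^ n → IsClosed (E n k)) : LowerSemicontinuous (urysohnFun E) := by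
  intro x y hy
  rcases lt_or_ge y 0 with hy0 | hy0
  · exact Eventually.of_forall fun x' => hy0.trans_le (urysohnFun_nonneg x')
  obtain ⟨n, k, hk, hyk, hkx⟩ := exists_dyadic_btwn hy0 hy (urysohnFun_le_one x)
  have hxE : x ∉ E n k := fun hxE => absurd hkx (not_lt.2 (urysohnFun_le_of_mem hk hxE))
  filter_upwards [(hclosed n k hk).isOpen_compl.mem_nhds hxE] with x' hx'
  exact hyk.trans_le (not_lt.1 fun h => hx' (mem_of_urysohnFun_lt hmono hk h))

end UrysohnFun

section ApproximateContinuity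

variable {μ : Measure 𝒞}

lemma densityOne_abs_sub_lt_of_lowerSemicontinuous {f : 𝒞 → ℝ} (hf : LowerSemicontinuous f)
    {β : 𝒞} {ε : ℝ} (hε : 0 < ε) (h : densityOne μ {γ | f γ < f β + ε} β) :
    densityOne μ {γ | |f γ - f β| < ε} β :=
  densityOne_mono (densityOne_inter_of_mem_nhds h (hf β (f β - ε) (by linarith)))
    fun γ (hγ : f γ < f β + ε ∧ f β - ε < f γ) => show |f γ - f β| < ε by
      rw [abs_sub_lt_iff]
      constructor <;> linarith [hγ.1, hγ.2]

variable (hμ : ∀ s : List Bool, μ (cyl s) = (1/2 : ℝ≥0∞) ^ s.length) {E : ℕ → ℕ → Set 𝒞}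
  (hE : ∀ {n k n' k' : ℕ}, k' ≤ 2 ^ n' → (k : ℝ) / 2 ^ n < k' / 2 ^ n' →
    ClosedDensityNbhd μ (E n k) (E n' k'))
include hμ hE

lemma densityOne_urysohnFun_lt (β : 𝒞) {ε : ℝ} (hε : 0 < ε) :
    densityOne μ {γ | urysohnFun E γ < urysohnFun E β + ε} β := by
  rcases (urysohnFun_le_one (E := E) β).lt_or_eq with hβ | hβ
  · obtain ⟨n', k', hk', hβk', hk'ε⟩ := exists_dyadic_btwn (urysohnFun_nonneg β)
      (lt_min (lt_add_of_pos_right _ hε) hβ) (min_le_right _ _)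
    obtain ⟨n, k, hk, hβk, hkk'⟩ := exists_dyadic_btwn (urysohnFun_nonneg β) hβk'
      (hk'ε.trans_le (min_le_right _ _)).le
    have hβE : β ∈ E n k :=
      mem_of_urysohnFun_lt (fun hk' hlt => (hE hk'.le hlt).subset) hk hβk
    refine densityOne_mono ((hE hk'.le hkk').densityOne_of_mem β hβE) fun γ hγ => ?_
    exact (urysohnFun_le_of_mem hk' hγ).trans_lt (hk'ε.trans_le (min_le_left _ _))
  · refine densityOne_mono (densityOne_univ hμ β) fun γ _ => ?_
    show urysohnFun E γ < urysohnFun E β + ε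
    linarith [urysohnFun_le_one (E := E) γ]

end ApproximateContinuity

theorem urysohn_density_topology_general
    (μ : Measure (ℕ → Bool))
    (hμ : ∀ s : List Bool, μ (cyl s) = (1/2 : ℝ≥0∞) ^ s.length)
    (C G : Set (ℕ → Bool)) (hC : IsClosed C)
    (hdisj : Disjoint C G) (hG0 : μ G = 0) :
    ∃ h : (ℕ → Bool) → ℝ,
      (∀ β, h β ∈ Set.Icc (0:ℝ) 1) ∧ Measurable h ∧ LowerSemicontinuous h ∧
      (∀ β ∈ C, h β = 0) ∧ (∀ β ∈ G, h β = 1) ∧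
      ∀ β : ℕ → Bool, ∀ ε > (0:ℝ), densityOne μ {γ | |h γ - h β| < ε} β := by
  obtain ⟨A, hCA, hAG⟩ := exists_closedDensityNbhd_disjoint hμ hC hG0 hdisj
  set E := dyadicScale (ClosedDensityNbhd μ) C A
  have hE : ∀ {n k n' k' : ℕ}, k' ≤ 2 ^ n' → (k : ℝ) / 2 ^ n < k' / 2 ^ n' →
      ClosedDensityNbhd μ (E n k) (E n' k') := fun hk' hlt =>
    rel_dyadicScale_of_lt (fun _ _ h => h.exists_between hμ) hCA hk' hlt
  have hEA : ∀ n k, k < 2 ^ n → ClosedDensityNbhd μ (E n k) A := fun n k hk => by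
    simpa only [E, dyadicScale_zero_one] using
      hE (n' := 0) (k' := 1) le_rfl (by simpa using div_two_pow_lt_one hk)
  have hlsc := lowerSemicontinuous_urysohnFun (fun hk' hlt => (hE hk'.le hlt).subset)
    fun n k hk => (hEA n k hk).isClosed_left
  refine ⟨urysohnFun E, fun β => ⟨urysohnFun_nonneg β, urysohnFun_le_one β⟩, hlsc.measurable,
    hlsc, fun β hβ => ?_, fun β hβ => ?_, fun β ε hε =>
      densityOne_abs_sub_lt_of_lowerSemicontinuous hlsc hε (densityOne_urysohnFun_lt hμ hE β hε)⟩
  · have hβE : β ∈ E 0 0 := by simpa only [E, dyadicScale_zero_zero] using hβ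
    refine le_antisymm ?_ (urysohnFun_nonneg β)
    simpa using urysohnFun_le_of_mem (n := 0) (k := 0) one_pos hβE
  · exact urysohnFun_eq_one fun n k hk hβE =>
      Set.disjoint_left.1 hAG ((hEA n k hk).subset hβE) hβ

/-- Urysohn-type lemma for the density topology: for `C` closed
and `G` a Gδ set disjoint from `C` with `λ(G) = 0`, there is a λ-measurable
lower semicontinuous `h : 2^ω → [0,1]` with `h ≡ 0` on `C`, `h ≡ 1` on `G`,
which is approximately continuous at every point. -/
theorem urysohn_density_topology
    (μ : Measure (ℕ → Bool))
    (hμ : ∀ s : List Bool, μ (cyl s) = (1/2 : ℝ≥0∞) ^ s.length)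
    (C G : Set (ℕ → Bool)) (hC : IsClosed C) (hG : IsGδ G)
    (hdisj : Disjoint C G) (hG0 : μ G = 0) :
    ∃ h : (ℕ → Bool) → ℝ,
      (∀ β, h β ∈ Set.Icc (0:ℝ) 1) ∧ Measurable h ∧ LowerSemicontinuous h ∧
      (∀ β ∈ C, h β = 0) ∧ (∀ β ∈ G, h β = 1) ∧
      ∀ β : ℕ → Bool, ∀ ε > (0:ℝ), densityOne μ {γ | |h γ - h β| < ε} β :=
  urysohn_density_topology_general μ hμ C G hC hdisj hG0
end

section
/- The set 𝓟₂ of sequences of everywhere converging martingales whose associated functions converge pointwise to zero, 𝓟₂ := {(f_k)_{k∈ℕ} ∈ 𝓟^ℕ : for every β ∈ 2^ω, lim_{k→∞} ψ(f_k)(β) = 0}, is Π¹₁-complete: 𝓟₂ is a coanalytic subset of the Polish space ([0,1]^{2^{<ω}})^ℕ, and for every coanalytic subset A of 2^ω there is a continuous map g : 2^ω → 𝓜^ℕ with A = g⁻¹(𝓟₂). -/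
open MeasureTheory Filter Topology
open scoped ENNReal

/-- The compact space `𝓜` of martingales, as a subspace of `[0,1]^{2^{<ω}}`. -/
abbrev Mart := {f : List Bool → ℝ // IsMartingale f}

/-- The set `𝓟` of everywhere converging martingales. -/
def Pconv : Set Mart := {f | ∀ β : ℕ → Bool, osc f.1 β = 0}

/-- `𝓟₂`: sequences of everywhere converging martingales whose associated
functions converge pointwise to zero. -/
def Ptwo : Set (ℕ → Mart) :=
  {F | (∀ k, F k ∈ Pconv) ∧
    ∀ β : ℕ → Bool, Tendsto (fun k => psi (F k).1 β) atTop (𝓝 (0:ℝ))}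

/-!
Coanalyticity: `F ∈ 𝓟₂` iff `(F, β)` lies, for every `β`, in a Borel subset of `𝓜^ℕ × 2^ω`
(oscillations and limits of countably many continuous evaluations), so the complement of `𝓟₂`
is the projection of a Borel set.

Hardness: an analytic `S ⊆ 2^ω` is the range of a continuous `f : ℕ^ℕ → 2^ω`. Code
`x ∈ ℕ^ℕ` by the stream `γ = 1^(x 0) 0 1^(x 1) 0 …`. Then `β ∈ S` iff some `γ` has infinitely
many positions `k` with `γ k = 0` at which the blocks read so far form a node of the tree of
approximations to an `f`-preimage of `β`; continuity of `f` turns the infinite branch coded by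
such a `γ` into a genuine preimage. The `k`-th condition depends only on `γ↾(k+1)` and
`β↾(k+1)`, so it is the limit function of a martingale `g(β)_k` that is constant below level
`k + 1` and locally constant in `β`. Then `g(β) ∈ 𝓟₂` iff no `γ` satisfies the conditions
infinitely often, i.e. iff `β ∉ S`.
-/

open Set

theorem exists_getElem_eq_of_prefix_chain {α : Type*} {L : ℕ → List α}
    (hL : ∀ ⦃m n⦄, m ≤ n → L m <+: L n) (hlen : ∀ i, ∃ n, i < (L n).length) :
    ∃ x : ℕ → α, ∀ n i (hi : i < (L n).length), (L n)[i] = x i := by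
  choose N hN using hlen
  refine ⟨fun i => (L (N i))[i]'(hN i), fun n i hi => ?_⟩
  exact ((hL (le_max_left n (N i))).getElem hi).trans
    ((hL (le_max_right n (N i))).getElem (hN i)).symm

theorem List.ofFn_prefix_ofFn {α : Type*} (x : ℕ → α) {m n : ℕ} (h : m ≤ n) :
    List.ofFn (fun i : Fin m => x i) <+: List.ofFn (fun i : Fin n => x i) :=
  List.prefix_iff_getElem.2 ⟨by simpa using h, fun i hi => by simp⟩

theorem DependsOn.isLocallyConstant_of_Iio {E : ℕ → Type*} [∀ i, TopologicalSpace (E i)]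
    [∀ i, DiscreteTopology (E i)] {X : Type*} {φ : (∀ i, E i) → X} {n : ℕ}
    (hφ : DependsOn φ (Iio n)) : IsLocallyConstant φ :=
  (IsLocallyConstant.iff_exists_open φ).2 fun β =>
    ⟨PiNat.cylinder β n, PiNat.isOpen_cylinder E β n, PiNat.self_mem_cylinder β n,
      fun _ hβ' => hφ fun i hi => hβ' i hi⟩

theorem tendsto_pi_of_forall_lt_eq {X : Type*} [TopologicalSpace X] {y : ℕ → ℕ → X}
    {x : ℕ → X} (h : ∀ n, ∀ i < n, y n i = x i) : Tendsto y atTop (𝓝 x) :=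
  tendsto_pi_nhds.2 fun i => tendsto_const_nhds.congr' <|
    (eventually_gt_atTop i).mono fun n hn => (h n i hn).symm

theorem Continuous.eq_of_forall_exists_lt_eq {X Y : Type*} [TopologicalSpace X]
    [TopologicalSpace Y] [T2Space Y] {f : (ℕ → X) → ℕ → Y} (hf : Continuous f)
    {x : ℕ → X} {β : ℕ → Y}
    (h : ∀ n, ∃ y, (∀ i < n, y i = x i) ∧ ∀ i < n, f y i = β i) :
    f x = β := by
  choose y hyx hyβ using h
  exact tendsto_nhds_unique ((hf.tendsto x).comp (tendsto_pi_of_forall_lt_eq hyx))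
    (tendsto_pi_of_forall_lt_eq hyβ)

open Classical in
theorem tendsto_ite_one_zero_iff {ι : Type*} {l : Filter ι} {p : ι → Prop} :
    Tendsto (fun k => if p k then (1 : ℝ) else 0) l (𝓝 0) ↔ ∀ᶠ k in l, ¬ p k := by
  refine ⟨fun h => (h.eventually (Iio_mem_nhds one_pos)).mono fun k hk hp => ?_,
    fun h => tendsto_const_nhds.congr' (h.mono fun k hk => (if_neg hk).symm)⟩
  simp [hp] at hk

section Segments

variable (β : ℕ → Bool)

@[simp]
theorem length_seg (l : ℕ) : (seg β l).length = l := by simp [seg]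

@[simp]
theorem getElem_seg (l i : ℕ) (h : i < (seg β l).length) : (seg β l)[i] = β i := by simp [seg]

theorem seg_prefix_seg {m n : ℕ} (h : m ≤ n) : seg β m <+: seg β n :=
  List.ofFn_prefix_ofFn β h

theorem take_seg {m l : ℕ} (h : m ≤ l) : (seg β l).take m = seg β m := by
  simpa using (List.prefix_iff_eq_take.1 (seg_prefix_seg β h)).symm

theorem seg_succ (l : ℕ) : seg β (l + 1) = seg β l ++ [β l] := by
  rw [seg, List.ofFn_succ_last]
  simp [seg]

theorem getLast?_seg_succ (l : ℕ) : (seg β (l + 1)).getLast? = some (β l) := by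
  rw [seg_succ, List.getLast?_concat]

theorem seg_length_eq_self {u : List Bool} (h : ∀ i (hi : i < u.length), u[i] = β i) :
    seg β u.length = u :=
  List.ext_getElem (by simp) fun i _ _ => by simp [h]

theorem isLocallyConstant_seg (l : ℕ) : IsLocallyConstant fun β : ℕ → Bool => seg β l :=
  DependsOn.isLocallyConstant_of_Iio fun β β' h => by
    simp only [seg, List.ofFn_inj]
    exact funext fun i => h i i.2

end Segments

/-- The lengths of the completed runs of `true`s, each run being closed by a `false`; an
unfinished final run is dropped. -/
def decodeBlocks : List Bool → List ℕ
  | [] => []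
  | false :: u => 0 :: decodeBlocks u
  | true :: u => (decodeBlocks u).modifyHead (· + 1)

def encodeBlocks (s : List ℕ) : List Bool :=
  s.flatMap fun a => List.replicate a true ++ [false]

theorem decodeBlocks_replicate_append (t : ℕ) (u : List Bool) :
    decodeBlocks (List.replicate t true ++ false :: u) = t :: decodeBlocks u := by
  induction t with
  | zero => rfl
  | succ t ih => simp [List.replicate_succ, decodeBlocks, ih]

theorem decodeBlocks_encodeBlocks_append (s : List ℕ) (v : List Bool) :
    decodeBlocks (encodeBlocks s ++ v) = s ++ decodeBlocks v := by
  induction s with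
  | nil => rfl
  | cons a s ih => simp [encodeBlocks, decodeBlocks_replicate_append, ← ih]

theorem decodeBlocks_encodeBlocks (s : List ℕ) : decodeBlocks (encodeBlocks s) = s := by
  simpa [decodeBlocks] using decodeBlocks_encodeBlocks_append s []

theorem length_le_length_encodeBlocks (s : List ℕ) : s.length ≤ (encodeBlocks s).length := by
  induction s with
  | nil => simp [encodeBlocks]
  | cons a s ih => simp [encodeBlocks] at ih ⊢; omega

theorem List.IsPrefix.encodeBlocks {s t : List ℕ} (h : s <+: t) :
    encodeBlocks s <+: encodeBlocks t := by
  obtain ⟨r, rfl⟩ := h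
  exact ⟨_root_.encodeBlocks r, by simp [_root_.encodeBlocks]⟩

theorem decodeBlocks_prefix_decodeBlocks_append (u v : List Bool) :
    decodeBlocks u <+: decodeBlocks (u ++ v) := by
  induction u with
  | nil => exact List.nil_prefix
  | cons b u ih =>
    obtain ⟨r, hr⟩ := ih
    cases b with
    | false => exact ⟨r, by simp [decodeBlocks, ← hr]⟩
    | true =>
      rcases h : decodeBlocks u with _ | ⟨a, t⟩
      · simp [decodeBlocks, h]
      · exact ⟨r, by simp [decodeBlocks, ← hr, h]⟩

theorem List.IsPrefix.decodeBlocks {u v : List Bool} (h : u <+: v) :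
    decodeBlocks u <+: decodeBlocks v := by
  obtain ⟨r, rfl⟩ := h
  exact decodeBlocks_prefix_decodeBlocks_append u r

theorem length_decodeBlocks_append_false (u : List Bool) :
    (decodeBlocks (u ++ [false])).length = (decodeBlocks u).length + 1 := by
  induction u with
  | nil => rfl
  | cons b u ih => cases b <;> simp [decodeBlocks, ih]

theorem length_decodeBlocks_le (u : List Bool) : (decodeBlocks u).length ≤ u.length := by
  induction u with
  | nil => rfl
  | cons b u ih => cases b <;> simp [decodeBlocks] <;> omega

theorem exists_frequently_decodeBlocks_seg_eq (x : ℕ → ℕ) :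
    ∃ γ : ℕ → Bool, ∃ᶠ k in atTop, γ k = false ∧
      ∀ i (hi : i < (decodeBlocks (seg γ (k + 1))).length),
        (decodeBlocks (seg γ (k + 1)))[i] = x i := by
  set L : ℕ → List Bool := fun n => encodeBlocks (List.ofFn fun i : Fin n => x i)
  have hL : ∀ n, n ≤ (L n).length := fun n => by
    simpa only [List.length_ofFn] using
      length_le_length_encodeBlocks (List.ofFn fun i : Fin n => x i)
  obtain ⟨γ, hγ⟩ := exists_getElem_eq_of_prefix_chain (L := L)
    (fun m n h => (List.ofFn_prefix_ofFn x h).encodeBlocks)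
    (fun i => ⟨i + 1, hL (i + 1)⟩)
  refine ⟨γ, frequently_atTop.2 fun N => ?_⟩
  have hlen := hL (N + 1)
  obtain ⟨k, hk⟩ : ∃ k, (L (N + 1)).length = k + 1 :=
    ⟨_, (Nat.sub_add_cancel (by omega)).symm⟩
  have hseg : seg γ (k + 1) = L (N + 1) := hk ▸ seg_length_eq_self γ (hγ (N + 1))
  refine ⟨k, by omega, ?_, ?_⟩
  · have hlast : (L (N + 1)).getLast? = some false := by
      simp only [L, List.ofFn_succ_last]
      simp [encodeBlocks]
    simpa [← hseg, getLast?_seg_succ] using hlast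
  · simp only [hseg, L, decodeBlocks_encodeBlocks, List.getElem_ofFn, implies_true]

theorem tendsto_length_decodeBlocks_seg {γ : ℕ → Bool} (h : ∃ᶠ k in atTop, γ k = false) :
    Tendsto (fun n => (decodeBlocks (seg γ n)).length) atTop atTop := by
  refine tendsto_atTop_atTop_of_monotone
    (fun m n hmn => (seg_prefix_seg γ hmn).decodeBlocks.length_le) fun i => ?_
  induction i with
  | zero => exact ⟨0, Nat.zero_le _⟩
  | succ i ih =>
    obtain ⟨n, hn⟩ := ih
    obtain ⟨k, hnk, hk⟩ := frequently_atTop.1 h n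
    refine ⟨k + 1, ?_⟩
    rw [seg_succ, hk, length_decodeBlocks_append_false]
    have := (seg_prefix_seg γ hnk).decodeBlocks.length_le
    omega

/-- The tree of finite approximations to an `f`-preimage of `β`. -/
def InPreimageTree (f : (ℕ → ℕ) → ℕ → Bool) (β : ℕ → Bool) (s : List ℕ) : Prop :=
  ∃ y : ℕ → ℕ, ∀ i (hi : i < s.length), y i = s[i] ∧ f y i = β i

theorem dependsOn_inPreimageTree (f : (ℕ → ℕ) → ℕ → Bool) (s : List ℕ) :
    DependsOn (fun β => InPreimageTree f β s) (Iio s.length) := by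
  intro β β' h
  simp only [InPreimageTree]
  congr! 6 with y i hi
  exact h i hi

theorem Continuous.mem_range_iff_exists_frequently {f : (ℕ → ℕ) → ℕ → Bool}
    (hf : Continuous f) (β : ℕ → Bool) :
    β ∈ range f ↔
      ∃ γ : ℕ → Bool, ∃ᶠ k in atTop,
        γ k = false ∧ InPreimageTree f β (decodeBlocks (seg γ (k + 1))) := by
  constructor
  · rintro ⟨x, rfl⟩
    obtain ⟨γ, hγ⟩ := exists_frequently_decodeBlocks_seg_eq x
    exact ⟨γ, hγ.mono fun _ ⟨hk, hx⟩ => ⟨hk, x, fun i hi => ⟨(hx i hi).symm, rfl⟩⟩⟩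
  · rintro ⟨γ, hγ⟩
    have hlen : Tendsto (fun n => (decodeBlocks (seg γ n)).length) atTop atTop :=
      tendsto_length_decodeBlocks_seg (hγ.mono fun _ hk => hk.1)
    obtain ⟨x, hx⟩ := exists_getElem_eq_of_prefix_chain
      (fun m n h => (seg_prefix_seg γ h).decodeBlocks) fun i => (hlen.eventually_gt_atTop i).exists
    refine ⟨x, hf.eq_of_forall_exists_lt_eq fun n => ?_⟩
    obtain ⟨k, hkn, -, y, hy⟩ :=
      ((hlen.comp (tendsto_add_atTop_nat 1)).eventually_ge_atTop n).and_frequently hγ |>.exists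
    exact ⟨y, fun i hi => (hy i (hi.trans_le hkn)).1.trans (hx _ _ _),
      fun i hi => (hy i (hi.trans_le hkn)).2⟩

theorem MeasureTheory.AnalyticSet.exists_eq_setOf_exists_frequently {S : Set (ℕ → Bool)}
    (hS : AnalyticSet S) :
    ∃ D : (ℕ → Bool) → ℕ → List Bool → Prop,
      (∀ k, DependsOn (fun β => D β k) (Iio (k + 1))) ∧
      S = {β | ∃ γ : ℕ → Bool, ∃ᶠ k in atTop, D β k (seg γ (k + 1))} := by
  rcases AnalyticSet_def S ▸ hS with rfl | ⟨f, hf, rfl⟩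
  · exact ⟨fun _ _ _ => False, fun _ _ _ _ => rfl, by simp⟩
  refine ⟨fun β k u => u.length = k + 1 ∧ u.getLast? = some false ∧
    InPreimageTree f β (decodeBlocks u), fun k β β' h => ?_, ?_⟩
  · funext u
    refine propext (and_congr_right fun hu => and_congr_right fun _ => ?_)
    refine Eq.to_iff (dependsOn_inPreimageTree f _ fun i hi => h i ?_)
    exact (mem_Iio.1 hi).trans_le (hu ▸ length_decodeBlocks_le u)
  · ext β
    simp [hf.mem_range_iff_exists_frequently, getLast?_seg_succ]

open Classical in
noncomputable def extAverage (P : List Bool → Prop) : ℕ → List Bool → ℝ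
  | 0, s => if P s then 1 else 0
  | d + 1, s => (extAverage P d (s ++ [false]) + extAverage P d (s ++ [true])) / 2

theorem extAverage_mem_Icc (P : List Bool → Prop) (d : ℕ) (s : List Bool) :
    extAverage P d s ∈ Icc (0 : ℝ) 1 := by
  induction d generalizing s with
  | zero => simp only [extAverage]; split_ifs <;> norm_num
  | succ d ih =>
    obtain ⟨h0, h1⟩ := ih (s ++ [false])
    obtain ⟨h0', h1'⟩ := ih (s ++ [true])
    constructor <;> simp only [extAverage] <;> linarith

/-- The martingale of the clopen set `{γ | P (γ↾n)}`: its value at `s` is the conditional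
probability of that set given the cylinder of `s`. -/
noncomputable def indicatorMart (P : List Bool → Prop) (n : ℕ) (s : List Bool) : ℝ :=
  extAverage P (n - s.length) (s.take n)

theorem isMartingale_indicatorMart (P : List Bool → Prop) (n : ℕ) :
    IsMartingale (indicatorMart P n) := by
  refine ⟨fun s => extAverage_mem_Icc _ _ _, fun s => ?_⟩
  simp only [indicatorMart, List.length_append, List.length_singleton]
  rcases le_or_gt n s.length with h | h
  · rw [List.take_append_of_le_length h, List.take_append_of_le_length h,
      Nat.sub_eq_zero_of_le h, Nat.sub_eq_zero_of_le (by omega)]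
    ring
  · obtain ⟨d, hd⟩ : ∃ d, n - s.length = d + 1 := ⟨n - s.length - 1, by omega⟩
    rw [hd, show n - (s.length + 1) = d by omega, List.take_of_length_le h.le,
      List.take_of_length_le (by simp; omega), List.take_of_length_le (by simp; omega),
      extAverage]

open Classical in
theorem indicatorMart_seg (P : List Bool → Prop) {n l : ℕ} (γ : ℕ → Bool) (h : n ≤ l) :
    indicatorMart P n (seg γ l) = if P (seg γ n) then 1 else 0 := by
  rw [indicatorMart, take_seg γ h, length_seg, Nat.sub_eq_zero_of_le h, extAverage]

theorem osc_eq_zero_of_eventually_eq {f : List Bool → ℝ} {β : ℕ → Bool} {c : ℝ}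
    (h : ∀ᶠ l in atTop, f (seg β l) = c) : osc f β = 0 := by
  obtain ⟨N, hN⟩ := eventually_atTop.1 h
  have hS : ∀ M,
      0 ≤ ⨆ p : {n // M ≤ n}, ⨆ q : {n // M ≤ n}, |f (seg β p.1) - f (seg β q.1)| :=
    fun M => Real.iSup_nonneg fun _ => Real.iSup_nonneg fun _ => abs_nonneg _
  refine le_antisymm ((ciInf_le ⟨0, forall_mem_range.2 hS⟩ N).trans ?_) (Real.iInf_nonneg hS)
  refine Real.iSup_nonpos fun p => Real.iSup_nonpos fun q => ?_
  rw [hN p p.2, hN q q.2, sub_self, abs_zero]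

theorem psi_eq_of_eventually_eq {f : List Bool → ℝ} {β : ℕ → Bool} {c : ℝ}
    (h : ∀ᶠ l in atTop, f (seg β l) = c) : psi f β = c :=
  (tendsto_const_nhds.congr' (h.mono fun _ => Eq.symm)).limUnder_eq

theorem osc_indicatorMart (P : List Bool → Prop) (n : ℕ) (γ : ℕ → Bool) :
    osc (indicatorMart P n) γ = 0 :=
  osc_eq_zero_of_eventually_eq ((eventually_ge_atTop n).mono fun _ => indicatorMart_seg P γ)

open Classical in
theorem psi_indicatorMart (P : List Bool → Prop) (n : ℕ) (γ : ℕ → Bool) :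
    psi (indicatorMart P n) γ = if P (seg γ n) then 1 else 0 :=
  psi_eq_of_eventually_eq ((eventually_ge_atTop n).mono fun _ => indicatorMart_seg P γ)

theorem exists_continuous_preimage_Ptwo_eq (D : (ℕ → Bool) → ℕ → List Bool → Prop)
    (hD : ∀ k, DependsOn (fun β => D β k) (Iio (k + 1))) :
    ∃ g : (ℕ → Bool) → ℕ → Mart, Continuous g ∧
      g ⁻¹' Ptwo = {β | ∀ γ : ℕ → Bool, ∀ᶠ k in atTop, ¬D β k (seg γ (k + 1))} := by
  refine ⟨fun β k => ⟨indicatorMart (D β k) (k + 1), isMartingale_indicatorMart _ _⟩,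
    continuous_pi fun k => ?_, ?_⟩
  · refine (DependsOn.isLocallyConstant_of_Iio (n := k + 1) fun β β' h => ?_).continuous
    simp only [show D β k = D β' k from hD k h]
  · ext β
    simp [Ptwo, Pconv, osc_indicatorMart, psi_indicatorMart, tendsto_ite_one_zero_iff]

theorem isClosed_setOf_isMartingale : IsClosed {f : List Bool → ℝ | IsMartingale f} := by
  simp only [IsMartingale, ofPred_and, ofPred_forall]
  exact (isClosed_iInter fun s => isClosed_Icc.preimage (continuous_apply s)).inter
    (isClosed_iInter fun s => isClosed_eq (continuous_apply s) (by fun_prop))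

instance : PolishSpace Mart := isClosed_setOf_isMartingale.polishSpace

theorem continuous_apply_seg (k l : ℕ) :
    Continuous fun z : (ℕ → Mart) × (ℕ → Bool) => (z.1 k).1 (seg z.2 l) := by
  refine continuous_iff_continuousAt.2 fun z => ?_
  have hseg : ∀ᶠ z' in 𝓝 z, seg z'.2 l = seg z.2 l :=
    continuous_snd.continuousAt.eventually ((isLocallyConstant_seg l).eventually_eq z.2)
  have hcont : Continuous fun z' : (ℕ → Mart) × (ℕ → Bool) => (z'.1 k).1 (seg z.2 l) :=
    (continuous_apply _).comp
      (continuous_subtype_val.comp ((continuous_apply k).comp continuous_fst))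
  exact hcont.continuousAt.congr (hseg.mono fun z' h => congrArg (z'.1 k).1 h.symm)

theorem Ptwo_isCoanalytic : IsCoanalytic Ptwo := by
  borelize ((ℕ → Mart) × (ℕ → Bool))
  -- instance search does not find this one
  have : PolishSpace (ℕ → Bool) := {}
  set B := (⋂ k, {z : (ℕ → Mart) × (ℕ → Bool) | osc (z.1 k).1 z.2 = 0}) ∩
    {z | Tendsto (fun k => psi (z.1 k).1 z.2) atTop (𝓝 0)}
  have hev : ∀ k l, Measurable fun z : (ℕ → Mart) × (ℕ → Bool) => (z.1 k).1 (seg z.2 l) :=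
    fun k l => (continuous_apply_seg k l).measurable
  have hosc : ∀ k, Measurable fun z : (ℕ → Mart) × (ℕ → Bool) => osc (z.1 k).1 z.2 :=
    fun k => .iInf fun _ => .iSup fun p => .iSup fun q => ((hev k p).sub (hev k q)).abs
  have hpsi : ∀ k, Measurable fun z : (ℕ → Mart) × (ℕ → Bool) => psi (z.1 k).1 z.2 :=
    fun k => (StronglyMeasurable.limUnder fun l => (hev k l).stronglyMeasurable).measurable
  have hB : MeasurableSet B := (MeasurableSet.iInter fun k =>
    measurableSet_eq_fun (hosc k) measurable_const).inter (measurableSet_tendsto _ hpsi)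
  have hPtwo : ∀ F, F ∈ Ptwo ↔ ∀ β, (F, β) ∈ B := fun F => by
    simp only [Ptwo, Pconv, B, mem_ofPred_eq, mem_inter_iff, mem_iInter, forall_and]
    exact and_congr_left' forall_comm
  have hcompl : Ptwoᶜ = Prod.fst '' Bᶜ := by
    ext F
    simp only [mem_compl_iff, hPtwo, not_forall, mem_image, Prod.exists, exists_and_right,
      exists_eq_right]
  rw [IsCoanalytic, hcompl]
  exact hB.compl.analyticSet.image_of_continuous continuous_fst

/-- `𝓟₂` is `Π¹₁`-complete. -/
theorem Ptwo_coanalytic_complete :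
    IsCoanalytic Ptwo ∧
    ∀ A : Set (ℕ → Bool), IsCoanalytic A →
      ∃ g : (ℕ → Bool) → (ℕ → Mart), Continuous g ∧ A = g ⁻¹' Ptwo := by
  refine ⟨Ptwo_isCoanalytic, fun A hA => ?_⟩
  obtain ⟨D, hD, hAc⟩ := AnalyticSet.exists_eq_setOf_exists_frequently hA
  obtain ⟨g, hg, hpre⟩ := exists_continuous_preimage_Ptwo_eq D hD
  refine ⟨g, hg, ?_⟩
  rw [hpre, ← compl_compl A, hAc]
  ext β
  simp [not_frequently]
end
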